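/- If the chain (b_1, …, b_r) of integers with all b_i ≥ 2 is of class T, then so is the chain (b_1 + 1, b_2, …, b_r, 2), obtained by increasing the first entry by 1 and appending an entry 2. -/

import Mathlib

/-!
A chain is encoded by the product `M` of the matrices `!![b, -1; 1, 0]`. It lies in SL₂(ℤ), its
first column `(p, q)` gives `[b_1, …, b_r] = p / q`, and its second column is minus the first
column of the product for `b_1, …, b_{r-1}`; when all `b_i ≥ 2` these columns increase, so the
second column lies in `(-p, 0] × (-q, 0]`. For a chain of class T, coprimality forces
`(p, q) = (dn², dna - 1)`, and then the determinant together with the bound on the bottom-right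
entry determines `M` completely. Raising `b_1` by one multiplies `M` on the left by
`!![1, 1; 0, 1]`, appending `2` multiplies it on the right by `!![2, -1; 1, 0]`, and the result is
the matrix of the parameters `(d, n + a, a)`.
-/

/-- The Hirzebruch–Jung continued fraction value [c_1, …, c_t] of a list of
rationals, defined by [c_t] = c_t and [c_i, …, c_t] = c_i − 1/[c_{i+1}, …, c_t].
(For the empty list we set the value to 0; since 1/0 = 0 in ℚ, this gives
`hj [c] = c`.) -/
def hj : List ℚ → ℚ
  | [] => 0
  | c :: rest => c - 1 / hj rest

/-- A chain (b_1, …, b_r) of integers with all b_i ≥ 2 is of class T if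
[b_1, …, b_r] = dn²/(dna − 1) for some integers d ≥ 1, n ≥ 2, 1 ≤ a < n with
gcd(n, a) = 1. -/
def IsClassT (l : List ℤ) : Prop :=
  (∀ b ∈ l, 2 ≤ b) ∧
    ∃ d n a : ℤ, 1 ≤ d ∧ 2 ≤ n ∧ 1 ≤ a ∧ a < n ∧ Int.gcd n a = 1 ∧
      hj (l.map (fun b => (b : ℚ))) = (d * n ^ 2 : ℚ) / (d * n * a - 1)

open Matrix

def hjStep (c : ℤ) : Matrix (Fin 2) (Fin 2) ℤ := !![c, -1; 1, 0]

def hjMatrix (l : List ℤ) : Matrix (Fin 2) (Fin 2) ℤ := (l.map hjStep).prod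

/-- The unique matrix in SL₂(ℤ) with first column `(dn², dna - 1)` and bottom-right entry in
`(-(dna - 1), 0]`. -/
def classTMatrix (d n a : ℤ) : Matrix (Fin 2) (Fin 2) ℤ :=
  !![d * n ^ 2, d * n * a + 1 - d * n ^ 2; d * n * a - 1, d * a ^ 2 - d * n * a + 1]

@[simp]
lemma hjMatrix_nil : hjMatrix [] = 1 := rfl

lemma hjMatrix_cons (c : ℤ) (l : List ℤ) : hjMatrix (c :: l) = hjStep c * hjMatrix l := rfl

lemma hjMatrix_concat (l : List ℤ) (c : ℤ) : hjMatrix (l ++ [c]) = hjMatrix l * hjStep c := by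
  simp [hjMatrix]

lemma hjStep_add_one (c : ℤ) : hjStep (c + 1) = !![1, 1; 0, 1] * hjStep c := by
  simp [hjStep]

lemma det_hjMatrix (l : List ℤ) : (hjMatrix l).det = 1 := by
  induction l with
  | nil => simp
  | cons c l ih => rw [hjMatrix_cons, det_mul, ih, hjStep, det_fin_two_of]; ring

lemma hjMatrix_cons_apply_zero_zero (c : ℤ) (l : List ℤ) :
    hjMatrix (c :: l) 0 0 = c * hjMatrix l 0 0 - hjMatrix l 1 0 := by
  simp [hjMatrix_cons, hjStep, mul_apply, Fin.sum_univ_two, sub_eq_add_neg]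

lemma hjMatrix_cons_apply_one_zero (c : ℤ) (l : List ℤ) :
    hjMatrix (c :: l) 1 0 = hjMatrix l 0 0 := by
  simp [hjMatrix_cons, hjStep, mul_apply, Fin.sum_univ_two]

lemma hjMatrix_concat_apply_zero (l : List ℤ) (c : ℤ) (i : Fin 2) :
    hjMatrix (l ++ [c]) i 0 = c * hjMatrix l i 0 + hjMatrix l i 1 := by
  simp [hjMatrix_concat, hjStep, mul_apply, Fin.sum_univ_two, mul_comm]

lemma hjMatrix_concat_apply_one (l : List ℤ) (c : ℤ) (i : Fin 2) :
    hjMatrix (l ++ [c]) i 1 = -hjMatrix l i 0 := by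
  simp [hjMatrix_concat, hjStep, mul_apply, Fin.sum_univ_two]

section Bounds

variable {l : List ℤ} (h2 : ∀ b ∈ l, 2 ≤ b)
include h2

lemma hjMatrix_apply_bounds (i : Fin 2) :
    -hjMatrix l i 1 < hjMatrix l i 0 ∧ 0 ≤ hjMatrix l i 0 := by
  induction l using List.reverseRecOn with
  | nil => fin_cases i <;> simp
  | append_singleton l c ih =>
    have hc := h2 c (by simp)
    obtain ⟨hlt, hnonneg⟩ := ih (fun b hb => h2 b (by simp [hb]))
    rw [hjMatrix_concat_apply_zero, hjMatrix_concat_apply_one]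
    constructor <;> nlinarith

lemma hjMatrix_apply_one_mem_Ioc (hl : l ≠ []) (i : Fin 2) :
    hjMatrix l i 1 ∈ Set.Ioc (-hjMatrix l i 0) 0 := by
  obtain ⟨l, c, rfl⟩ := List.eq_nil_or_concat' l |>.resolve_left hl
  have h := hjMatrix_apply_bounds h2 i
  have hl := hjMatrix_apply_bounds (fun b hb => h2 b (List.mem_append_left _ hb)) i
  rw [hjMatrix_concat_apply_one] at h ⊢
  constructor <;> linarith

lemma hjMatrix_zero_zero_pos : 0 < hjMatrix l 0 0 := by
  rcases eq_or_ne l [] with rfl | hl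
  · simp
  · have h := hjMatrix_apply_one_mem_Ioc h2 hl 0
    linarith [h.1, h.2]

lemma hj_map_intCast :
    hj (l.map (fun b => (b : ℚ))) = hjMatrix l 0 0 / hjMatrix l 1 0 := by
  induction l with
  | nil => simp [hj]
  | cons c l ih =>
    have hl2 : ∀ b ∈ l, 2 ≤ b := fun b hb => h2 b (by simp [hb])
    have hP : (hjMatrix l 0 0 : ℚ) ≠ 0 := by exact_mod_cast (hjMatrix_zero_zero_pos hl2).ne'
    -- `(b : ℚ)` in the statement elaborates through the list monad's coercion
    show hj ((c : ℚ) :: l.map (fun b => (b : ℚ))) = _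
    rw [hj, ih hl2, one_div_div, hjMatrix_cons_apply_zero_zero, hjMatrix_cons_apply_one_zero]
    push_cast
    field_simp

end Bounds

lemma eq_of_mul_sub_mul_eq_one {p q r s r' s' : ℤ} (h : p * s - r * q = 1)
    (h' : p * s' - r' * q = 1) (hs : s ∈ Set.Ioc (-q) 0) (hs' : s' ∈ Set.Ioc (-q) 0) :
    r = r' ∧ s = s' := by
  have hq : 0 < q := by linarith [hs.1, hs.2]
  have hcop : IsCoprime q p := ⟨-r, s, by linear_combination h⟩
  have hdvd : q ∣ s - s' := hcop.dvd_of_dvd_mul_left ⟨r - r', by linear_combination h - h'⟩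
  obtain rfl : s = s' := by
    have hlt : |s - s'| < q := abs_lt.mpr ⟨by linarith [hs.1, hs'.2], by linarith [hs.2, hs'.1]⟩
    linarith [Int.eq_zero_of_abs_lt_dvd hdvd hlt]
  have : (r - r') * q = 0 := by linear_combination h' - h
  exact ⟨by simpa [sub_eq_zero, hq.ne'] using this, rfl⟩

lemma one_le_mul_mul_sub_one {d n a : ℤ} (hd : 1 ≤ d) (hn : 2 ≤ n) (ha : 1 ≤ a) :
    1 ≤ d * n * a - 1 := by
  have : 2 ≤ d * n := by nlinarith
  nlinarith

lemma IsClassT.ne_nil {l : List ℤ} (hT : IsClassT l) : l ≠ [] := by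
  rintro rfl
  obtain ⟨-, d, n, a, hd, hn, ha, -, -, hval⟩ := hT
  have hA : (1 : ℚ) ≤ d * n * a - 1 := by exact_mod_cast one_le_mul_mul_sub_one hd hn ha
  have hpos : (0 : ℚ) < d * n ^ 2 / (d * n * a - 1) := by positivity
  change (0 : ℚ) = _ at hval
  exact hpos.ne hval

lemma isClassT_iff_hjMatrix_eq {l : List ℤ} :
    IsClassT l ↔ (∀ b ∈ l, 2 ≤ b) ∧ ∃ d n a : ℤ, 1 ≤ d ∧ 2 ≤ n ∧ 1 ≤ a ∧ a < n ∧
      Int.gcd n a = 1 ∧ hjMatrix l = classTMatrix d n a := by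
  constructor
  · intro hT
    have hl := hT.ne_nil
    obtain ⟨h2, d, n, a, hd, hn, ha, han, hgcd, hval⟩ := hT
    refine ⟨h2, d, n, a, hd, hn, ha, han, hgcd, ?_⟩
    have hA := one_le_mul_mul_sub_one hd hn ha
    have hdet := det_hjMatrix l
    rw [det_fin_two] at hdet
    have hs := hjMatrix_apply_one_mem_Ioc h2 hl 1
    have hq : 0 < hjMatrix l 1 0 := by linarith [hs.1, hs.2]
    rw [hj_map_intCast h2] at hval
    have hcop : IsCoprime (hjMatrix l 0 0) (hjMatrix l 1 0) :=
      ⟨hjMatrix l 1 1, -hjMatrix l 0 1, by linear_combination hdet⟩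
    have hcop' : IsCoprime (d * n ^ 2) (d * n * a - 1) := ⟨d * a ^ 2, -(d * n * a + 1), by ring⟩
    obtain ⟨hp, hq⟩ := Rat.div_int_inj hq (by omega) (Int.isCoprime_iff_gcd_eq_one.mp hcop)
      (Int.isCoprime_iff_gcd_eq_one.mp hcop') (by push_cast; exact hval)
    simp only [hp, hq] at hdet hs
    obtain ⟨hr, hs⟩ := eq_of_mul_sub_mul_eq_one hdet
      (s' := d * a ^ 2 - d * n * a + 1) (r' := d * n * a + 1 - d * n ^ 2) (by ring) hs
      ⟨by nlinarith, by nlinarith⟩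
    rw [eta_fin_two (hjMatrix l), hp, hq, hr, hs, classTMatrix]
  · rintro ⟨h2, d, n, a, hd, hn, ha, han, hgcd, hM⟩
    refine ⟨h2, d, n, a, hd, hn, ha, han, hgcd, ?_⟩
    rw [hj_map_intCast h2, hM]
    simp [classTMatrix]

lemma hjMatrix_add_one_cons_append_two (b : ℤ) (t : List ℤ) :
    hjMatrix ((b + 1) :: t ++ [2]) = !![1, 1; 0, 1] * hjMatrix (b :: t) * hjStep 2 := by
  simp only [List.cons_append, hjMatrix_concat, hjMatrix_cons, hjStep_add_one, mul_assoc]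

lemma unitriangular_mul_classTMatrix_mul_hjStep_two (d n a : ℤ) :
    !![1, 1; 0, 1] * classTMatrix d n a * hjStep 2 = classTMatrix d (n + a) a := by
  ext i j
  fin_cases i <;> fin_cases j <;> simp [classTMatrix, hjStep] <;> ring

theorem classT_append_two_general (l : List ℤ) (hT : IsClassT l) :
    IsClassT (((l.getD 0 0 + 1) :: l.tail) ++ [2]) := by
  obtain ⟨b, t, rfl⟩ := List.exists_cons_of_ne_nil hT.ne_nil
  obtain ⟨h2, d, n, a, hd, hn, ha, han, hgcd, hM⟩ := isClassT_iff_hjMatrix_eq.mp hT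
  rw [List.getD_cons_zero, List.tail_cons, isClassT_iff_hjMatrix_eq,
    hjMatrix_add_one_cons_append_two, hM, unitriangular_mul_classTMatrix_mul_hjStep_two]
  refine ⟨?_, d, n + a, a, hd, by omega, ha, by omega, by rwa [Int.gcd_add_self_left], rfl⟩
  simp only [List.forall_mem_append, List.forall_mem_cons] at h2 ⊢
  exact ⟨⟨by omega, h2.2⟩, by simp⟩

/-- If the chain (b_1, …, b_r) with all b_i ≥ 2 is of class T, then so is the
chain (b_1 + 1, b_2, …, b_r, 2), obtained by increasing the first entry by 1
and appending an entry 2. -/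
theorem classT_append_two (l : List ℤ) (hne : l ≠ [])
    (h2 : ∀ b ∈ l, 2 ≤ b) (hT : IsClassT l) :
    IsClassT (((l.getD 0 0 + 1) :: l.tail) ++ [2]) :=
  classT_append_two_general l hT
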